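/- Let A ∈ ℝ^{m×n}, b ∈ ℝ^m, λ > 0, and suppose x̂ ∈ ℝⁿ is a solution of the SR-LASSO with Ax̂ ≠ b. Then ȳ := (b − Ax̂)/‖Ax̂ − b‖₂ is the unique maximizer of ⟨b, y⟩ over {y ∈ ℝ^m : ‖Aᵀy‖_∞ ≤ λ, ‖y‖₂ ≤ 1}, and ‖ȳ‖₂ = 1. -/
import Mathlib


open Matrix Filter Topology
open scoped BigOperators Classical

noncomputable def l2 {k : ℕ} (x : Fin k → ℝ) : ℝ := Real.sqrt (∑ i, (x i) ^ 2)

noncomputable def l1 {k : ℕ} (x : Fin k → ℝ) : ℝ := ∑ i, |x i|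

noncomputable def linf {k : ℕ} (x : Fin k → ℝ) : ℝ := sSup (Set.range fun i => |x i|)

noncomputable def dotp {k : ℕ} (x y : Fin k → ℝ) : ℝ := ∑ i, x i * y i

noncomputable def pinv {m s : ℕ} (M : Matrix (Fin m) (Fin s) ℝ) :
    Matrix (Fin s) (Fin m) ℝ := (Mᵀ * M)⁻¹ * Mᵀ

/-- The SR-LASSO objective f_{A,b,λ}(x) := ‖Ax − b‖₂ + λ‖x‖₁. -/
noncomputable def srObj {m n : ℕ} (A : Matrix (Fin m) (Fin n) ℝ) (b : Fin m → ℝ)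
    (lam : ℝ) (x : Fin n → ℝ) : ℝ := l2 (A.mulVec x - b) + lam * l1 x

/-- x is a solution of the SR-LASSO with data (A, b, λ). -/
def IsSol {m n : ℕ} (A : Matrix (Fin m) (Fin n) ℝ) (b : Fin m → ℝ) (lam : ℝ)
    (x : Fin n → ℝ) : Prop := ∀ w : Fin n → ℝ, srObj A b lam x ≤ srObj A b lam w

/-- y is feasible for the SR-LASSO dual: ‖Aᵀy‖_∞ ≤ λ and ‖y‖₂ ≤ 1. -/
noncomputable def DualFeas {m n : ℕ} (A : Matrix (Fin m) (Fin n) ℝ) (lam : ℝ)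
    (y : Fin m → ℝ) : Prop := linf (Aᵀ.mulVec y) ≤ lam ∧ l2 y ≤ 1

/-- y is a solution of the SR-LASSO dual: it is feasible and maximizes ⟨b, ·⟩
over the feasible set. -/
noncomputable def IsDualSol {m n : ℕ} (A : Matrix (Fin m) (Fin n) ℝ) (b : Fin m → ℝ)
    (lam : ℝ) (y : Fin m → ℝ) : Prop :=
  DualFeas A lam y ∧ ∀ y' : Fin m → ℝ, DualFeas A lam y' → dotp b y' ≤ dotp b y

section helpers
variable {k : ℕ}

lemma l2_eq_norm (v : Fin k → ℝ) :
    l2 v = ‖(WithLp.equiv 2 (Fin k → ℝ)).symm v‖ := by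
  rw [EuclideanSpace.norm_eq]; simp [l2, sq_abs]

lemma dotp_eq_inner (v w : Fin k → ℝ) :
    dotp v w = @inner ℝ _ _ ((WithLp.equiv 2 (Fin k → ℝ)).symm v)
      ((WithLp.equiv 2 (Fin k → ℝ)).symm w) := by
  simp [PiLp.inner_apply, RCLike.inner_apply, dotp, mul_comm]

lemma l2_nonneg (v : Fin k → ℝ) : 0 ≤ l2 v := Real.sqrt_nonneg _

lemma l2_pos {v : Fin k → ℝ} (hv : v ≠ 0) : 0 < l2 v := by
  rw [l2_eq_norm]; rw [norm_pos_iff]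
  exact fun h => hv ((WithLp.equiv 2 (Fin k → ℝ)).symm.injective (h.trans rfl))

lemma l2_smul (c : ℝ) (v : Fin k → ℝ) : l2 (c • v) = |c| * l2 v := by
  rw [l2_eq_norm, l2_eq_norm]
  have : (WithLp.equiv 2 (Fin k → ℝ)).symm (c • v)
      = c • (WithLp.equiv 2 (Fin k → ℝ)).symm v := rfl
  rw [this, norm_smul, Real.norm_eq_abs]

lemma l2_neg (v : Fin k → ℝ) : l2 (-v) = l2 v := by
  simp [l2]

lemma l2_sq (v : Fin k → ℝ) : (l2 v) ^ 2 = ∑ i, (v i) ^ 2 :=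
  Real.sq_sqrt (Finset.sum_nonneg fun i _ => sq_nonneg _)

lemma dotp_self (v : Fin k → ℝ) : dotp v v = (l2 v) ^ 2 := by
  rw [l2_sq]; simp [dotp, sq]

lemma dotp_le (v w : Fin k → ℝ) : dotp v w ≤ l2 v * l2 w := by
  rw [dotp_eq_inner, l2_eq_norm, l2_eq_norm]
  exact real_inner_le_norm _ _

lemma abs_le_linf (v : Fin k → ℝ) (j : Fin k) : |v j| ≤ linf v :=
  le_csSup (Set.Finite.bddAbove (Set.finite_range _)) ⟨j, rfl⟩

lemma linf_le {v : Fin k → ℝ} {lam : ℝ} (h0 : 0 ≤ lam) (h : ∀ j, |v j| ≤ lam) :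
    linf v ≤ lam :=
  Real.sSup_le (by rintro x ⟨j, rfl⟩; exact h j) h0

lemma dotp_le_l1 {x u : Fin k → ℝ} {lam : ℝ} (h : ∀ j, |u j| ≤ lam) :
    dotp x u ≤ lam * l1 x := by
  calc dotp x u ≤ ∑ j, |x j| * lam := by
        apply Finset.sum_le_sum
        intro j _
        calc x j * u j ≤ |x j * u j| := le_abs_self _
          _ = |x j| * |u j| := abs_mul _ _
          _ ≤ |x j| * lam := mul_le_mul_of_nonneg_left (h j) (abs_nonneg _)
    _ = lam * l1 x := by rw [l1, Finset.mul_sum]; exact Finset.sum_congr rfl fun _ _ => mul_comm _ _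

lemma l1_add_le (v w : Fin k → ℝ) : l1 (v + w) ≤ l1 v + l1 w := by
  rw [l1, l1, l1, ← Finset.sum_add_distrib]
  exact Finset.sum_le_sum fun i _ => abs_add_le _ _

lemma l1_smul (c : ℝ) (v : Fin k → ℝ) : l1 (c • v) = |c| * l1 v := by
  simp [l1, abs_mul, Finset.mul_sum]

lemma l1_single (t : ℝ) (j : Fin k) : l1 (t • (Pi.single j 1 : Fin k → ℝ)) = |t| := by
  rw [l1]
  rw [Finset.sum_eq_single j]
  · simp
  · intro i _ hij; simp [Pi.single_apply, hij]
  · simp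

lemma l2_sq_add (v w : Fin k → ℝ) :
    ∑ i, (v i + w i) ^ 2 = (l2 v) ^ 2 + 2 * dotp v w + (l2 w) ^ 2 := by
  rw [l2_sq, l2_sq, dotp, Finset.mul_sum, ← Finset.sum_add_distrib, ← Finset.sum_add_distrib]
  exact Finset.sum_congr rfl fun i _ => by ring

lemma sqrt_le_add {r d : ℝ} (hr : 0 < r) (hd : 0 ≤ r ^ 2 + d) :
    Real.sqrt (r ^ 2 + d) ≤ r + d / (2 * r) := by
  have h2r : (0:ℝ) < 2 * r := by linarith
  have hkey : 2 * r * (d / (2 * r)) = d := by field_simp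
  have hpos : 0 ≤ r + d / (2 * r) := by
    by_contra hneg
    push_neg at hneg
    have h4 : 2 * r * (r + d / (2 * r)) < 0 := mul_neg_of_pos_of_neg h2r hneg
    nlinarith
  rw [show r + d / (2 * r) = Real.sqrt ((r + d / (2 * r)) ^ 2) from (Real.sqrt_sq hpos).symm]
  apply Real.sqrt_le_sqrt
  nlinarith [sq_nonneg (d / (2 * r))]

lemma pos_lim {a K : ℝ} (h : ∀ t : ℝ, 0 < t → t < 1 → 0 ≤ a + t * K) : 0 ≤ a := by
  by_contra hc
  push_neg at hc
  rcases le_or_gt K 0 with hK | hK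
  · have := h (1/2) (by norm_num) (by norm_num); nlinarith
  · have ht0 : 0 < min (1/2) (-a / (2 * K)) := lt_min (by norm_num) (div_pos (by linarith) (by linarith))
    have ht1 : min (1/2) (-a / (2 * K)) < 1 :=
      lt_of_le_of_lt (min_le_left _ _) (by norm_num)
    have h1 := h _ ht0 ht1
    have h2 : min (1/2) (-a / (2 * K)) * K ≤ (-a / (2 * K)) * K :=
      mul_le_mul_of_nonneg_right (min_le_right _ _) hK.le
    have h3 : (-a / (2 * K)) * K = -a / 2 := by field_simp
    linarith
end helpers


section main2
variable {m n : ℕ}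

lemma dotp_eq_dot {k : ℕ} (v w : Fin k → ℝ) : dotp v w = v ⬝ᵥ w := rfl

lemma dotp_adj (A : Matrix (Fin m) (Fin n) ℝ) (x : Fin n → ℝ) (y : Fin m → ℝ) :
    dotp x (Aᵀ.mulVec y) = dotp (A.mulVec x) y := by
  rw [dotp_eq_dot, dotp_eq_dot, Matrix.dotProduct_mulVec, Matrix.vecMul_transpose]

lemma dotp_split (A : Matrix (Fin m) (Fin n) ℝ) (x : Fin n → ℝ) (b y : Fin m → ℝ) :
    dotp b y = dotp (b - A.mulVec x) y + dotp x (Aᵀ.mulVec y) := by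
  rw [dotp_adj]
  simp only [dotp_eq_dot]
  rw [sub_dotProduct]
  ring

lemma dotp_comm {k : ℕ} (v w : Fin k → ℝ) : dotp v w = dotp w v := by
  simp [dotp, mul_comm]

lemma dotp_neg_right {k : ℕ} (v w : Fin k → ℝ) : dotp v (-w) = -(dotp v w) := by
  simp [dotp, mul_neg, Finset.sum_neg_distrib]

lemma dotp_smul_right {k : ℕ} (c : ℝ) (v w : Fin k → ℝ) :
    dotp v (c • w) = c * dotp v w := by
  simp only [dotp, Pi.smul_apply, smul_eq_mul, Finset.mul_sum]
  exact Finset.sum_congr rfl fun i _ => by ring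

lemma l2_perturb {k : ℕ} (r w : Fin k → ℝ) (t : ℝ) (hrr : 0 < l2 r) :
    l2 (fun i => r i + t * w i)
      ≤ l2 r + (2 * t * dotp r w + t ^ 2 * (l2 w) ^ 2) / (2 * l2 r) := by
  have hsum : ∑ i, (r i + t * w i) ^ 2
      = (l2 r) ^ 2 + (2 * t * dotp r w + t ^ 2 * (l2 w) ^ 2) := by
    rw [l2_sq r, l2_sq w, dotp]
    have h1 : ∀ i : Fin k, (r i + t * w i) ^ 2
        = r i ^ 2 + (2 * t) * (r i * w i) + t ^ 2 * (w i) ^ 2 := fun i => by ring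
    calc ∑ i, (r i + t * w i) ^ 2
        = ∑ i, (r i ^ 2 + (2 * t) * (r i * w i) + t ^ 2 * (w i) ^ 2) :=
          Finset.sum_congr rfl fun i _ => h1 i
      _ = _ := by
          rw [Finset.sum_add_distrib, Finset.sum_add_distrib, ← Finset.mul_sum,
            ← Finset.mul_sum]
          ring
  have hnn : 0 ≤ (l2 r) ^ 2 + (2 * t * dotp r w + t ^ 2 * (l2 w) ^ 2) := by
    rw [← hsum]; exact Finset.sum_nonneg fun i _ => sq_nonneg _
  calc l2 (fun i => r i + t * w i)
      = Real.sqrt ((l2 r) ^ 2 + (2 * t * dotp r w + t ^ 2 * (l2 w) ^ 2)) := by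
        rw [l2, hsum]
    _ ≤ _ := sqrt_le_add hrr hnn

end main2

/-- if x̂ solves the SR-LASSO and Ax̂ ≠ b, then
ȳ := (b − Ax̂)/‖Ax̂ − b‖₂ has unit norm and is the unique dual maximizer. -/
theorem stmt_6 {m n : ℕ} (A : Matrix (Fin m) (Fin n) ℝ) (b : Fin m → ℝ)
    (lam : ℝ) (hlam : 0 < lam) (xhat : Fin n → ℝ)
    (hsol : IsSol A b lam xhat) (hres : A.mulVec xhat ≠ b)
    (ybar : Fin m → ℝ)
    (hybar : ybar = (l2 (A.mulVec xhat - b))⁻¹ • (b - A.mulVec xhat)) :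
    l2 ybar = 1 ∧ IsDualSol A b lam ybar ∧
      ∀ y : Fin m → ℝ, IsDualSol A b lam y → y = ybar := by
  classical
  set r : Fin m → ℝ := A.mulVec xhat - b with hrdef
  have hrne : r ≠ 0 := sub_ne_zero.mpr hres
  have hρ : 0 < l2 r := l2_pos hrne
  set ρ : ℝ := l2 r with hρdef
  have hbr : b - A.mulVec xhat = -r := by rw [hrdef]; abel
  have hybar' : ybar = ρ⁻¹ • (-r) := by rw [hybar, hbr]
  have hl2ybar : l2 ybar = 1 := by
    rw [hybar', l2_smul, l2_neg, abs_of_pos (inv_pos.mpr hρ), inv_mul_cancel₀ hρ.ne']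
  -- key perturbation bound coming from optimality of xhat
  have main : ∀ (v : Fin n → ℝ) (C : ℝ),
      (∀ t : ℝ, 0 < t → t < 1 → lam * l1 (xhat + t • v) ≤ lam * l1 xhat + t * C) →
      0 ≤ dotp r (A.mulVec v) + ρ * C := by
    intro v C hC
    have key : ∀ t : ℝ, 0 < t → t < 1 →
        0 ≤ (dotp r (A.mulVec v) + ρ * C) + t * ((l2 (A.mulVec v)) ^ 2 / 2) := by
      intro t ht0 ht1
      have hobj := hsol (xhat + t • v)
      rw [srObj, srObj] at hobj
      have hA : A.mulVec (xhat + t • v) - b = fun i => r i + t * (A.mulVec v) i := by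
        funext i
        rw [Matrix.mulVec_add, Matrix.mulVec_smul]
        simp [hrdef, Pi.sub_apply, Pi.add_apply, Pi.smul_apply, smul_eq_mul]
        ring
      have hl2b := l2_perturb r (A.mulVec v) t hρ
      rw [← hA] at hl2b
      have hl1 := hC t ht0 ht1
      set d := 2 * t * dotp r (A.mulVec v) + t ^ 2 * (l2 (A.mulVec v)) ^ 2 with hd
      have hstep : 0 ≤ d / (2 * ρ) + t * C := by linarith
      have h2ρ : (0:ℝ) < 2 * ρ := by linarith
      have hmul : (2 * ρ) * (d / (2 * ρ)) = d := by field_simp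
      have h1 : 0 ≤ d + (2 * ρ) * (t * C) := by
        have h2 := mul_nonneg h2ρ.le hstep
        rw [mul_add, hmul] at h2
        linarith
      have he : d + (2 * ρ) * (t * C)
          = (2 * t) * ((dotp r (A.mulVec v) + ρ * C) + t * ((l2 (A.mulVec v)) ^ 2 / 2))
            + (2 * ρ * t * C - 2 * t * ρ * C) := by rw [hd]; ring
      have h3 : 0 ≤ (2 * t) * ((dotp r (A.mulVec v) + ρ * C) + t * ((l2 (A.mulVec v)) ^ 2 / 2)) := by
        rw [he] at h1; linarith
      have h4 : (2 * t) * 0 ≤ (2 * t) * ((dotp r (A.mulVec v) + ρ * C) + t * ((l2 (A.mulVec v)) ^ 2 / 2)) := by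
        rw [mul_zero]; exact h3
      exact le_of_mul_le_mul_left h4 (by linarith)
    exact pos_lim key
  -- componentwise bound on A^T ybar
  have hcol : ∀ j : Fin n, A.mulVec (Pi.single j 1) = fun i => A i j := by
    intro j; funext i
    rw [Matrix.mulVec_single]
    simp
  have happ1 : ∀ j : Fin n, -(ρ * lam) ≤ dotp r (A.mulVec (Pi.single j 1)) := by
    intro j
    have h := main (Pi.single j 1) lam ?_
    · linarith
    · intro t ht0 _
      have h1 : l1 (xhat + t • (Pi.single j 1 : Fin n → ℝ)) ≤ l1 xhat + t := by
        calc l1 (xhat + t • (Pi.single j 1 : Fin n → ℝ))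
            ≤ l1 xhat + l1 (t • (Pi.single j 1 : Fin n → ℝ)) := l1_add_le _ _
          _ = l1 xhat + t := by rw [l1_single, abs_of_pos ht0]
      nlinarith
  have happ2 : ∀ j : Fin n, dotp r (A.mulVec (Pi.single j 1)) ≤ ρ * lam := by
    intro j
    have h := main (-(Pi.single j 1)) lam ?_
    · rw [Matrix.mulVec_neg, dotp_neg_right] at h
      linarith
    · intro t ht0 _
      have hrw : t • (-(Pi.single j 1 : Fin n → ℝ)) = (-t) • (Pi.single j 1 : Fin n → ℝ) := by
        rw [smul_neg, neg_smul]
      have h1 : l1 (xhat + t • (-(Pi.single j 1 : Fin n → ℝ))) ≤ l1 xhat + t := by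
        calc l1 (xhat + t • (-(Pi.single j 1 : Fin n → ℝ)))
            ≤ l1 xhat + l1 (t • (-(Pi.single j 1 : Fin n → ℝ))) := l1_add_le _ _
          _ = l1 xhat + t := by rw [hrw, l1_single, abs_neg, abs_of_pos ht0]
      nlinarith
  have hubar : ∀ j : Fin n, (Aᵀ.mulVec ybar) j = ρ⁻¹ * (-(dotp r (A.mulVec (Pi.single j 1)))) := by
    intro j
    rw [hcol j, hybar']
    rw [Matrix.mulVec, dotp]
    simp only [Matrix.transpose_apply, dotProduct, Pi.smul_apply, Pi.neg_apply,
      smul_eq_mul, Finset.mul_sum, ← Finset.sum_neg_distrib]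
    exact Finset.sum_congr rfl fun i _ => by ring
  have hcompbound : ∀ j : Fin n, |(Aᵀ.mulVec ybar) j| ≤ lam := by
    intro j
    rw [hubar j, abs_mul, abs_of_pos (inv_pos.mpr hρ), abs_neg]
    have h1 : |dotp r (A.mulVec (Pi.single j 1))| ≤ ρ * lam :=
      abs_le.mpr ⟨by linarith [happ1 j], happ2 j⟩
    calc ρ⁻¹ * |dotp r (A.mulVec (Pi.single j 1))| ≤ ρ⁻¹ * (ρ * lam) :=
          mul_le_mul_of_nonneg_left h1 (inv_pos.mpr hρ).le
      _ = lam := by field_simp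
  have hfeas : DualFeas A lam ybar := ⟨linf_le hlam.le hcompbound, hl2ybar.le⟩
  -- complementarity: dotp xhat (Aᵀ ybar) = lam * l1 xhat
  have happ3 : dotp r (A.mulVec xhat) + ρ * (lam * l1 xhat) ≤ 0 := by
    have h := main (-xhat) (-(lam * l1 xhat)) ?_
    · rw [Matrix.mulVec_neg, dotp_neg_right] at h
      linarith
    · intro t ht0 ht1
      have hrw : xhat + t • (-xhat) = (1 - t) • xhat := by
        funext i
        show xhat i + t * (-(xhat i)) = (1 - t) * xhat i
        ring
      rw [hrw, l1_smul, abs_of_pos (by linarith : (0:ℝ) < 1 - t)]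
      nlinarith [l1_smul (1:ℝ) xhat]
  have hdxu : dotp xhat (Aᵀ.mulVec ybar) = ρ⁻¹ * (-(dotp r (A.mulVec xhat))) := by
    rw [dotp_adj, hybar', dotp_smul_right, dotp_neg_right, dotp_comm]
  have hcompl : dotp xhat (Aᵀ.mulVec ybar) = lam * l1 xhat := by
    apply le_antisymm
    · exact dotp_le_l1 hcompbound
    · rw [hdxu]
      have h1 : -(dotp r (A.mulVec xhat)) ≥ ρ * (lam * l1 xhat) := by linarith
      calc lam * l1 xhat = ρ⁻¹ * (ρ * (lam * l1 xhat)) := by field_simp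
        _ ≤ ρ⁻¹ * (-(dotp r (A.mulVec xhat))) :=
            mul_le_mul_of_nonneg_left h1 (inv_pos.mpr hρ).le
  -- the dual objective value of ybar
  have hnn : dotp (-r) (-r) = dotp r r := by simp [dotp, neg_mul_neg]
  have hval1 : dotp (-r) (ρ⁻¹ • -r) = ρ := by
    rw [dotp_smul_right, hnn, dotp_self, sq, ← mul_assoc, inv_mul_cancel₀ hρ.ne', one_mul]
  have hvalue : dotp b ybar = ρ + lam * l1 xhat := by
    rw [dotp_split A xhat b ybar, hcompl, hbr, hybar', hval1]
  -- weak duality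
  have hweak : ∀ y' : Fin m → ℝ, DualFeas A lam y' → dotp b y' ≤ ρ + lam * l1 xhat := by
    intro y' hy'
    obtain ⟨hf1, hf2⟩ := hy'
    rw [dotp_split A xhat b y']
    have c1 : dotp (b - A.mulVec xhat) y' ≤ ρ := by
      have h1 := dotp_le (b - A.mulVec xhat) y'
      rw [hbr, l2_neg] at h1
      calc dotp (b - A.mulVec xhat) y' ≤ ρ * l2 y' := by rw [hbr]; exact h1
        _ ≤ ρ * 1 := mul_le_mul_of_nonneg_left hf2 hρ.le
        _ = ρ := mul_one ρ
    have c2 : dotp xhat (Aᵀ.mulVec y') ≤ lam * l1 xhat :=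
      dotp_le_l1 fun j => le_trans (abs_le_linf _ j) hf1
    linarith
  have hdual : IsDualSol A b lam ybar :=
    ⟨hfeas, fun y' hy' => (hweak y' hy').trans_eq hvalue.symm⟩
  refine ⟨hl2ybar, hdual, ?_⟩
  -- uniqueness
  intro y hy
  obtain ⟨⟨hy1, hy2⟩, hymax⟩ := hy
  have hval : dotp b y = ρ + lam * l1 xhat := by
    apply le_antisymm (hweak y ⟨hy1, hy2⟩)
    calc ρ + lam * l1 xhat = dotp b ybar := hvalue.symm
      _ ≤ dotp b y := hymax ybar hfeas
  have c2 : dotp xhat (Aᵀ.mulVec y) ≤ lam * l1 xhat :=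
    dotp_le_l1 fun j => le_trans (abs_le_linf _ j) hy1
  have hsplit := dotp_split A xhat b y
  have c1 : ρ ≤ dotp (-r) y := by rw [← hbr]; linarith
  have hcs : dotp (-r) y ≤ ρ * l2 y := by
    have h1 := dotp_le (-r) y
    rwa [l2_neg] at h1
  have hl2y : l2 y = 1 := by
    have h1 : ρ * 1 ≤ ρ * l2 y := by rw [mul_one]; exact le_trans c1 hcs
    exact le_antisymm hy2 (le_of_mul_le_mul_left h1 hρ)
  have heq : dotp (-r) y = l2 (-r) * l2 y := by
    rw [l2_neg, hl2y, mul_one]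
    refine le_antisymm ?_ c1
    calc dotp (-r) y ≤ ρ * l2 y := hcs
      _ = ρ := by rw [hl2y, mul_one]
  rw [dotp_eq_inner, l2_eq_norm, l2_eq_norm] at heq
  have h5 := inner_eq_norm_mul_iff_real.mp heq
  have hny : ‖(WithLp.equiv 2 (Fin m → ℝ)).symm y‖ = 1 := by rw [← l2_eq_norm]; exact hl2y
  have hnr : ‖(WithLp.equiv 2 (Fin m → ℝ)).symm (-r)‖ = ρ := by
    rw [← l2_eq_norm, l2_neg]
  rw [hny, hnr, one_smul] at h5
  have h6 : (WithLp.equiv 2 (Fin m → ℝ)).symm (-r)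
      = (WithLp.equiv 2 (Fin m → ℝ)).symm (ρ • y) := h5
  have h7 : -r = ρ • y := (WithLp.equiv 2 (Fin m → ℝ)).symm.injective h6
  rw [hybar', h7, smul_smul, inv_mul_cancel₀ hρ.ne', one_smul]
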